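/- The function z ↦ e^{-1/(2z)}·√(z/(1−z)) is integrable on the interval (0,1), and ∫_0^1 e^{-1/(2z)}·√(z/(1−z)) dz = √(π/(2e)). -/

import Mathlib

/-!
The substitution `z = 1 / (1 + x²)` maps `(0, ∞)` onto `(0, 1)` and turns `Q(z) dz` into
`2 e^{-1/2} · e^{-x²/2} / (1 + x²)² dx`, since `√(z / (1 - z)) = 1 / x`. The remaining integral
equals `√(2π) / 4`: the derivative of `x e^{-x²/2} / (1 + x²)` is
`2 e^{-x²/2} / (1 + x²)² - e^{-x²/2}`, and the Gaussian integral over `(0, ∞)` is `√(2π) / 2`.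
-/

open MeasureTheory

/-- Optimal homodyne scale density Q(z) = e^{-1/(2z)}·√(z/(1−z)). -/
noncomputable def Qhom (z : ℝ) : ℝ :=
  Real.exp (-1 / (2 * z)) * Real.sqrt (z / (1 - z))

open Set Real Filter Topology

lemma integrableOn_exp_neg_sq_div_two_Ioi :
    IntegrableOn (fun x : ℝ => exp (-x ^ 2 / 2)) (Ioi 0) :=
  (integrable_exp_neg_mul_sq (b := 1 / 2) (by norm_num)).integrableOn.congr_fun
    (fun x _ => by ring_nf) measurableSet_Ioi

lemma integral_exp_neg_sq_div_two_Ioi : ∫ x in Ioi (0 : ℝ), exp (-x ^ 2 / 2) = √(2 * π) / 2 := by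
  rw [setIntegral_congr_fun measurableSet_Ioi
    (fun x _ => by ring_nf : EqOn (fun x : ℝ => exp (-x ^ 2 / 2))
      (fun x => exp (-(1 / 2) * x ^ 2)) (Ioi 0)), integral_gaussian_Ioi]
  ring_nf

lemma integrableOn_exp_neg_sq_div_two_div_one_add_sq_sq :
    IntegrableOn (fun x : ℝ => exp (-x ^ 2 / 2) / (1 + x ^ 2) ^ 2) (Ioi 0) := by
  refine integrableOn_exp_neg_sq_div_two_Ioi.mono'
    ((Continuous.div (by fun_prop) (by fun_prop) fun x => by positivity).aestronglyMeasurable)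
    (Eventually.of_forall fun x => ?_)
  rw [norm_of_nonneg (by positivity)]
  exact div_le_self (exp_pos _).le (one_le_pow₀ (le_add_of_nonneg_right (sq_nonneg x)))

lemma hasDerivAt_mul_exp_neg_sq_div_two_div_one_add_sq (x : ℝ) :
    HasDerivAt (fun x : ℝ => x * exp (-x ^ 2 / 2) / (1 + x ^ 2))
      (2 * (exp (-x ^ 2 / 2) / (1 + x ^ 2) ^ 2) - exp (-x ^ 2 / 2)) x := by
  have hexp : HasDerivAt (fun x : ℝ => exp (-x ^ 2 / 2)) (exp (-x ^ 2 / 2) * (-x)) x :=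
    ((hasDerivAt_pow 2 x).neg.div_const 2).exp.congr_deriv (by simp only [Pi.neg_apply]; ring)
  have hden : HasDerivAt (fun x : ℝ => 1 + x ^ 2) (2 * x) x :=
    ((hasDerivAt_pow 2 x).const_add 1).congr_deriv (by ring)
  refine (((hasDerivAt_id' x).mul hexp).div hden (by positivity)).congr_deriv ?_
  simp only [Pi.mul_apply]
  field_simp
  ring

lemma tendsto_mul_exp_neg_sq_div_two_div_one_add_sq_atTop :
    Tendsto (fun x : ℝ => x * exp (-x ^ 2 / 2) / (1 + x ^ 2)) atTop (𝓝 0) := by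
  have hexp : Tendsto (fun x : ℝ => exp (-x ^ 2 / 2)) atTop (𝓝 0) :=
    tendsto_exp_atBot.comp
      ((tendsto_neg_atTop_atBot.comp (tendsto_pow_atTop two_ne_zero)).atBot_div_const two_pos)
  refine tendsto_of_tendsto_of_tendsto_of_le_of_le' tendsto_const_nhds hexp ?_ ?_
  · filter_upwards [eventually_ge_atTop 0] with x hx
    positivity
  · filter_upwards [eventually_ge_atTop 0] with x hx
    rw [div_le_iff₀ (by positivity), mul_comm]
    exact mul_le_mul_of_nonneg_left (by nlinarith [sq_nonneg (x - 1)]) (exp_pos _).le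

lemma integral_exp_neg_sq_div_two_div_one_add_sq_sq_Ioi :
    ∫ x in Ioi (0 : ℝ), exp (-x ^ 2 / 2) / (1 + x ^ 2) ^ 2 = √(2 * π) / 4 := by
  have hf := integrableOn_exp_neg_sq_div_two_div_one_add_sq_sq
  have hFTC := integral_Ioi_of_hasDerivAt_of_tendsto' (a := 0)
    (fun x _ => hasDerivAt_mul_exp_neg_sq_div_two_div_one_add_sq x)
    ((hf.const_mul 2).sub integrableOn_exp_neg_sq_div_two_Ioi)
    tendsto_mul_exp_neg_sq_div_two_div_one_add_sq_atTop
  rw [integral_sub (hf.const_mul 2) integrableOn_exp_neg_sq_div_two_Ioi, integral_const_mul,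
    integral_exp_neg_sq_div_two_Ioi] at hFTC
  simp only [zero_mul, zero_div, sub_zero] at hFTC
  linarith

lemma image_inv_one_add_sq_Ioi : (fun x : ℝ => (1 + x ^ 2)⁻¹) '' Ioi 0 = Ioo 0 1 := by
  ext z
  constructor
  · rintro ⟨x, hx, rfl⟩
    exact ⟨by positivity, inv_lt_one_of_one_lt₀ (by nlinarith [mem_Ioi.1 hx])⟩
  · rintro ⟨hz0, hz1⟩
    have hpos : 0 < z⁻¹ - 1 := sub_pos.2 (one_lt_inv₀ hz0 |>.2 hz1)
    refine ⟨√(z⁻¹ - 1), sqrt_pos.2 hpos, ?_⟩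
    simp only [sq_sqrt hpos.le, add_sub_cancel, inv_inv]

lemma injOn_inv_one_add_sq_Ioi : InjOn (fun x : ℝ => (1 + x ^ 2)⁻¹) (Ioi 0) := by
  intro a ha b hb hab
  simp only [inv_inj, add_right_inj] at hab
  exact (pow_left_inj₀ (le_of_lt ha) (le_of_lt hb) two_ne_zero).1 hab

lemma hasDerivAt_inv_one_add_sq (x : ℝ) :
    HasDerivAt (fun x : ℝ => (1 + x ^ 2)⁻¹) (-(2 * x) / (1 + x ^ 2) ^ 2) x :=
  (((hasDerivAt_pow 2 x).const_add 1).congr_deriv (by ring)).inv (by positivity)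

lemma abs_mul_Qhom_inv_one_add_sq {x : ℝ} (hx : 0 < x) :
    |-(2 * x) / (1 + x ^ 2) ^ 2| * Qhom (1 + x ^ 2)⁻¹
      = 2 * exp (-1 / 2) * (exp (-x ^ 2 / 2) / (1 + x ^ 2) ^ 2) := by
  have hratio : (1 + x ^ 2)⁻¹ / (1 - (1 + x ^ 2)⁻¹) = x⁻¹ ^ 2 := by
    field_simp
    ring
  have hexp : exp (-1 / (2 * (1 + x ^ 2)⁻¹)) = exp (-1 / 2) * exp (-x ^ 2 / 2) := by
    rw [← exp_add]
    congr 1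
    field_simp
    ring
  rw [Qhom, hratio, sqrt_sq (by positivity), hexp, abs_div, abs_neg,
    abs_of_pos (by positivity : 0 < 2 * x), abs_of_pos (by positivity : (0 : ℝ) < (1 + x ^ 2) ^ 2)]
  field_simp

lemma sqrt_pi_div_two_mul_exp_one : √(π / (2 * exp 1)) = 2 * exp (-1 / 2) * (√(2 * π) / 4) := by
  have hexp : exp (-1 / 2) = (√(exp 1))⁻¹ := by
    rw [sqrt_eq_rpow, ← exp_mul, ← exp_neg]
    norm_num
  rw [hexp, sqrt_div pi_pos.le, sqrt_mul two_pos.le, sqrt_mul two_pos.le]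
  have h2 : √2 ^ 2 = 2 := sq_sqrt two_pos.le
  field_simp
  rw [h2]
  norm_num

/-- The optimal homodyne scale density is integrable on (0,1) and
S(0,1) = ∫_0^1 e^{-1/(2z)}√(z/(1−z)) dz = √(π/(2e)). -/
theorem hom_scale_integrable :
    IntegrableOn Qhom (Set.Ioo 0 1) ∧
    ∫ z in Set.Ioo (0 : ℝ) 1, Qhom z =
      Real.sqrt (Real.pi / (2 * Real.exp 1)) := by
  have hderiv : ∀ x ∈ Ioi (0 : ℝ), HasDerivWithinAt (fun x : ℝ => (1 + x ^ 2)⁻¹)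
      (-(2 * x) / (1 + x ^ 2) ^ 2) (Ioi 0) x :=
    fun x _ => (hasDerivAt_inv_one_add_sq x).hasDerivWithinAt
  have hsubst : EqOn (fun x => |-(2 * x) / (1 + x ^ 2) ^ 2| • Qhom (1 + x ^ 2)⁻¹)
      (fun x => 2 * exp (-1 / 2) * (exp (-x ^ 2 / 2) / (1 + x ^ 2) ^ 2)) (Ioi 0) :=
    fun x hx => abs_mul_Qhom_inv_one_add_sq hx
  rw [← image_inv_one_add_sq_Ioi]
  constructor
  · rw [integrableOn_image_iff_integrableOn_abs_deriv_smul measurableSet_Ioi hderiv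
      injOn_inv_one_add_sq_Ioi]
    exact IntegrableOn.congr_fun (integrableOn_exp_neg_sq_div_two_div_one_add_sq_sq.const_mul _)
      hsubst.symm measurableSet_Ioi
  · rw [integral_image_eq_integral_abs_deriv_smul measurableSet_Ioi hderiv
      injOn_inv_one_add_sq_Ioi, setIntegral_congr_fun measurableSet_Ioi hsubst,
      integral_const_mul, integral_exp_neg_sq_div_two_div_one_add_sq_sq_Ioi,
      sqrt_pi_div_two_mul_exp_one]
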